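/- There exist smooth functions v, F : ℝⁿ → ℝ with Dv ⊗ Dv : D²v + Dv · DF = 0 on ℝⁿ, and open sets Ω⁺, Ω⁻ ⊆ ℝⁿ such that sup_{Ω⁺} v > max_{∂Ω⁺} v and inf_{Ω⁻} v < min_{∂Ω⁻} v; i.e., the Maximum and Minimum Principles fail for the ∞-Laplace equation perturbed by a linear first-order term. -/

import Mathlib

/-- The partial derivative `D_i f` of a scalar function on `ℝⁿ`. -/
noncomputable def pd {n : ℕ} (f : (Fin n → ℝ) → ℝ) (i : Fin n) (x : Fin n → ℝ) : ℝ :=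
  fderiv ℝ f x (Pi.single i 1)

lemma pd_comp' {n : ℕ} (g : ℝ → ℝ) (hg : Differentiable ℝ g) (i0 i : Fin n) (x : Fin n → ℝ) :
    pd (fun y => g (y i0)) i x = deriv g (x i0) * (Pi.single i 1 : Fin n → ℝ) i0 := by
  have hL : HasFDerivAt (fun y : Fin n → ℝ => y i0)
      (ContinuousLinearMap.proj i0 : (Fin n → ℝ) →L[ℝ] ℝ) x := hasFDerivAt_apply i0 x
  have hgd : HasDerivAt g (deriv g (x i0)) (x i0) := (hg (x i0)).hasDerivAt
  have h := hgd.comp_hasFDerivAt x hL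
  have h2 : fderiv ℝ (fun y : Fin n → ℝ => g (y i0)) x
      = deriv g (x i0) • (ContinuousLinearMap.proj i0 : (Fin n → ℝ) →L[ℝ] ℝ) := h.fderiv
  rw [pd, h2]
  simp

theorem stmt17 (n : ℕ) (hn : 0 < n) :
    ∃ (v F : (Fin n → ℝ) → ℝ),
      ContDiff ℝ (⊤ : ℕ∞) v ∧ ContDiff ℝ (⊤ : ℕ∞) F ∧
      (∀ x, (∑ i, ∑ j, pd v i x * pd v j x * pd (pd v j) i x)
        + (∑ i, pd v i x * pd F i x) = 0) ∧
      ∃ (Ωp Ωm : Set (Fin n → ℝ)), IsOpen Ωp ∧ IsOpen Ωm ∧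
        sSup (v '' Ωp) > sSup (v '' frontier Ωp) ∧
        sInf (v '' Ωm) < sInf (v '' frontier Ωm) := by
  set i0 : Fin n := ⟨0, hn⟩ with hi0
  have hproj : ContDiff ℝ (⊤ : ℕ∞) (fun x : Fin n → ℝ => x i0) :=
    (ContinuousLinearMap.proj i0 : (Fin n → ℝ) →L[ℝ] ℝ).contDiff
  set G : ℝ → ℝ := fun t => -(Real.cos t * Real.cos t) / 2 with hGdef
  have hG : ContDiff ℝ (⊤ : ℕ∞) G := ((Real.contDiff_cos.mul Real.contDiff_cos).neg).div_const 2
  have hGdiff : Differentiable ℝ G :=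
    (((Real.differentiable_cos.mul Real.differentiable_cos).neg).div_const 2)
  have hGderiv : ∀ t, deriv G t = Real.sin t * Real.cos t := by
    intro t
    have h1 : HasDerivAt G (-(-Real.sin t * Real.cos t + Real.cos t * -Real.sin t) / 2) t :=
      (((Real.hasDerivAt_cos t).mul (Real.hasDerivAt_cos t)).neg).div_const 2
    rw [h1.deriv]; ring
  have hsingle : ∀ i : Fin n, i ≠ i0 → (Pi.single i 1 : Fin n → ℝ) i0 = 0 := by
    intro i hi
    rw [Pi.single_apply, if_neg (Ne.symm hi)]
  have hsingle0 : (Pi.single i0 1 : Fin n → ℝ) i0 = 1 := by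
    rw [Pi.single_apply, if_pos rfl]
  refine ⟨fun x => Real.sin (x i0), fun x => G (x i0),
    Real.contDiff_sin.comp hproj, hG.comp hproj, ?_, ?_⟩
  · -- the PDE
    intro x
    have hpv : ∀ (i : Fin n) (y : Fin n → ℝ),
        pd (fun z => Real.sin (z i0)) i y
          = Real.cos (y i0) * (Pi.single i 1 : Fin n → ℝ) i0 := by
      intro i y
      rw [pd_comp' Real.sin Real.differentiable_sin i0 i y, Real.deriv_sin]
    have hpF : ∀ (i : Fin n),
        pd (fun z => G (z i0)) i x
          = (Real.sin (x i0) * Real.cos (x i0)) * (Pi.single i 1 : Fin n → ℝ) i0 := by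
      intro i
      rw [pd_comp' G hGdiff i0 i x, hGderiv]
    have hpv2 : ∀ (i j : Fin n),
        pd (pd (fun z => Real.sin (z i0)) j) i x
          = (-Real.sin (x i0) * (Pi.single j 1 : Fin n → ℝ) i0)
            * (Pi.single i 1 : Fin n → ℝ) i0 := by
      intro i j
      have hfun : pd (fun z => Real.sin (z i0)) j
          = fun y => (fun t => Real.cos t * (Pi.single j 1 : Fin n → ℝ) i0) (y i0) := by
        funext y; exact hpv j y
      rw [hfun, pd_comp' _ (Real.differentiable_cos.mul_const _) i0 i x]
      congr 1
      have : HasDerivAt (fun t => Real.cos t * (Pi.single j 1 : Fin n → ℝ) i0)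
          (-Real.sin (x i0) * (Pi.single j 1 : Fin n → ℝ) i0) (x i0) :=
        (Real.hasDerivAt_cos (x i0)).mul_const _
      rw [this.deriv]
    have key2 : ∀ (f : Fin n → Fin n → ℝ),
        (∀ i j, i ≠ i0 ∨ j ≠ i0 → f i j = 0) → (∑ i, ∑ j, f i j) = f i0 i0 := by
      intro f hf
      rw [Finset.sum_eq_single i0
        (fun b _ hb => Finset.sum_eq_zero fun j _ => hf b j (Or.inl hb))
        (fun h => absurd (Finset.mem_univ i0) h),
        Finset.sum_eq_single i0 (fun b _ hb => hf i0 b (Or.inr hb))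
        (fun h => absurd (Finset.mem_univ i0) h)]
    have key1 : ∀ (f : Fin n → ℝ), (∀ i, i ≠ i0 → f i = 0) → (∑ i, f i) = f i0 :=
      fun f hf => Finset.sum_eq_single i0 (fun b _ hb => hf b hb)
        (fun h => absurd (Finset.mem_univ i0) h)
    have hA : ∀ i j : Fin n, i ≠ i0 ∨ j ≠ i0 →
        Real.cos (x i0) * (Pi.single i 1 : Fin n → ℝ) i0
          * (Real.cos (x i0) * (Pi.single j 1 : Fin n → ℝ) i0)
          * (-Real.sin (x i0) * (Pi.single j 1 : Fin n → ℝ) i0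
            * (Pi.single i 1 : Fin n → ℝ) i0) = 0 := by
      intro i j h
      rcases h with h | h <;> rw [hsingle _ h] <;> ring
    have hB : ∀ i : Fin n, i ≠ i0 →
        Real.cos (x i0) * (Pi.single i 1 : Fin n → ℝ) i0
          * (Real.sin (x i0) * Real.cos (x i0) * (Pi.single i 1 : Fin n → ℝ) i0) = 0 := by
      intro i h
      rw [hsingle _ h]; ring
    simp only [hpv, hpF, hpv2]
    rw [key2 _ hA, key1 _ hB, hsingle0]
    ring
  · -- the open sets
    have h0p := (continuous_apply (A := fun _ : Fin n => ℝ) i0).frontier_preimage_subset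
      (Set.Ioo 0 Real.pi)
    have h0m := (continuous_apply (A := fun _ : Fin n => ℝ) i0).frontier_preimage_subset
      (Set.Ioo (-Real.pi) 0)
    refine ⟨(fun x : Fin n → ℝ => x i0) ⁻¹' Set.Ioo 0 Real.pi,
      (fun x : Fin n → ℝ => x i0) ⁻¹' Set.Ioo (-Real.pi) 0,
      isOpen_Ioo.preimage (continuous_apply i0), isOpen_Ioo.preimage (continuous_apply i0),
      ?_, ?_⟩
    · -- sup part
      have hfr : (fun x : Fin n → ℝ => Real.sin (x i0)) '' frontier
          ((fun x : Fin n → ℝ => x i0) ⁻¹' Set.Ioo 0 Real.pi) ⊆ {0} := by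
        rintro - ⟨x, hx, rfl⟩
        have h1 := h0p hx
        rw [frontier_Ioo Real.pi_pos] at h1
        rcases h1 with h | h
        · have h' : x i0 = 0 := h
          show Real.sin (x i0) = 0
          rw [h', Real.sin_zero]
        · have h' : x i0 = Real.pi := h
          show Real.sin (x i0) = 0
          rw [h', Real.sin_pi]
      have hle : sSup ((fun x : Fin n → ℝ => Real.sin (x i0)) '' frontier
          ((fun x : Fin n → ℝ => x i0) ⁻¹' Set.Ioo 0 Real.pi)) = 0 := by
        rcases Set.subset_singleton_iff_eq.mp hfr with h | h <;> rw [h]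
        · exact Real.sSup_empty
        · exact csSup_singleton 0
      rw [gt_iff_lt, hle]
      have hmem : (fun _ : Fin n => Real.pi / 2) ∈
          (fun x : Fin n → ℝ => x i0) ⁻¹' Set.Ioo 0 Real.pi := by
        constructor
        · positivity
        · linarith [Real.pi_pos]
      have hbdd : BddAbove ((fun x : Fin n → ℝ => Real.sin (x i0)) ''
          ((fun x : Fin n → ℝ => x i0) ⁻¹' Set.Ioo 0 Real.pi)) := by
        refine ⟨1, ?_⟩
        rintro - ⟨y, -, rfl⟩
        exact Real.sin_le_one _
      have h1 : (1:ℝ) ≤ sSup ((fun x : Fin n → ℝ => Real.sin (x i0)) ''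
          ((fun x : Fin n → ℝ => x i0) ⁻¹' Set.Ioo 0 Real.pi)) := by
        have h2 := le_csSup hbdd ⟨_, hmem, rfl⟩
        have h3 : Real.sin (Real.pi / 2) ≤ sSup ((fun x : Fin n → ℝ => Real.sin (x i0)) ''
          ((fun x : Fin n → ℝ => x i0) ⁻¹' Set.Ioo 0 Real.pi)) := h2
        rwa [Real.sin_pi_div_two] at h3
      linarith
    · -- inf part
      have hfr : (fun x : Fin n → ℝ => Real.sin (x i0)) '' frontier
          ((fun x : Fin n → ℝ => x i0) ⁻¹' Set.Ioo (-Real.pi) 0) ⊆ {0} := by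
        rintro - ⟨x, hx, rfl⟩
        have h1 := h0m hx
        rw [frontier_Ioo (by linarith [Real.pi_pos] : -Real.pi < 0)] at h1
        rcases h1 with h | h
        · have h' : x i0 = -Real.pi := h
          show Real.sin (x i0) = 0
          rw [h', Real.sin_neg, Real.sin_pi, neg_zero]
        · have h' : x i0 = 0 := h
          show Real.sin (x i0) = 0
          rw [h', Real.sin_zero]
      have hge : sInf ((fun x : Fin n → ℝ => Real.sin (x i0)) '' frontier
          ((fun x : Fin n → ℝ => x i0) ⁻¹' Set.Ioo (-Real.pi) 0)) = 0 := by
        rcases Set.subset_singleton_iff_eq.mp hfr with h | h <;> rw [h]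
        · exact Real.sInf_empty
        · exact csInf_singleton 0
      rw [hge]
      have hmem : (fun _ : Fin n => -(Real.pi / 2)) ∈
          (fun x : Fin n → ℝ => x i0) ⁻¹' Set.Ioo (-Real.pi) 0 := by
        constructor
        · linarith [Real.pi_pos]
        · linarith [Real.pi_pos]
      have hbdd : BddBelow ((fun x : Fin n → ℝ => Real.sin (x i0)) ''
          ((fun x : Fin n → ℝ => x i0) ⁻¹' Set.Ioo (-Real.pi) 0)) := by
        refine ⟨-1, ?_⟩
        rintro - ⟨y, -, rfl⟩
        exact Real.neg_one_le_sin _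
      have h1 : sInf ((fun x : Fin n → ℝ => Real.sin (x i0)) ''
          ((fun x : Fin n → ℝ => x i0) ⁻¹' Set.Ioo (-Real.pi) 0)) ≤ -1 := by
        have h2 := csInf_le hbdd ⟨_, hmem, rfl⟩
        have h3 : sInf ((fun x : Fin n → ℝ => Real.sin (x i0)) ''
          ((fun x : Fin n → ℝ => x i0) ⁻¹' Set.Ioo (-Real.pi) 0)) ≤ Real.sin (-(Real.pi / 2)) := h2
        rwa [Real.sin_neg, Real.sin_pi_div_two] at h3
      linarith
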